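/- Fix a deterministic input sequence u_0,…,u_T with ‖u_t‖₂ ≤ β for all t, assume the noise assumption and the stability assumption, and assume Ṽ = ŨᵀŨ is positive definite with smallest eigenvalue λ_min(Ṽ). Let ΔG = vec(Ĝ) − vec(G). Then the mean estimation error satisfies ‖E[ΔG]‖_Ṽ ≤ β² ‖B‖ ‖C‖ (φ ρᴸ/(1−ρ)) √(T−L) and ‖E[ΔG]‖₂ ≤ β² ‖B‖ ‖C‖ (φ ρᴸ/(1−ρ)) √((T−L)/λ_min(Ṽ)). -/

import Mathlib

open MeasureTheory ProbabilityTheory Matrix Finset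

noncomputable section

/-- Frobenius norm of a real matrix. -/
def frobNorm {m k : Type*} [Fintype m] [Fintype k] (M : Matrix m k ℝ) : ℝ :=
  Real.sqrt (∑ i, ∑ j, M i j ^ 2)

/-- Spectral (ℓ²-operator) norm of a real matrix. -/
def specNorm {m k : Type*} [Fintype m] [Fintype k] [DecidableEq k]
    (M : Matrix m k ℝ) : ℝ :=
  ‖LinearMap.toContinuousLinearMap (Matrix.toEuclideanLin M)‖

/-- Euclidean norm of a vector. -/
def vecNorm {k : Type*} [Fintype k] (v : k → ℝ) : ℝ :=
  Real.sqrt (∑ i, v i ^ 2)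

/-- Ellipsoidal norm `‖v‖_M = √(vᵀ M v)`. -/
def mnorm {k : Type*} [Fintype k] (M : Matrix k k ℝ) (v : k → ℝ) : ℝ :=
  Real.sqrt (v ⬝ᵥ (M *ᵥ v))

/-- Kronecker product of two vectors. -/
def vkron {a b : Type*} (x : a → ℝ) (y : b → ℝ) : a × b → ℝ := fun i => x i.1 * y i.2

/-- Smallest eigenvalue of a symmetric matrix, as the infimum of the Rayleigh
quotient over unit vectors. -/
def lambdaMin {κ : Type*} [Fintype κ] (M : Matrix κ κ ℝ) : ℝ :=
  sInf {r : ℝ | ∃ v : κ → ℝ, ∑ i, v i ^ 2 = 1 ∧ r = v ⬝ᵥ (M *ᵥ v)}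

/-- The history vector `ū_t = (u_t, u_{t-1}, …, u_{t-L+1})`, block `i` being `u_{t-i}`. -/
def ubar {p : ℕ} (L : ℕ) (u : ℕ → Fin p → ℝ) (t : ℕ) : Fin L × Fin p → ℝ :=
  fun i => u (t - (i.1 : ℕ)) i.2

/-- The state sequence of the system `x_{t+1} = A x_t + B u_t + w_t`, `x_0 = 0`. -/
def state {Ω : Type*} {n p : ℕ} (A : Matrix (Fin n) (Fin n) ℝ)
    (B : Matrix (Fin n) (Fin p) ℝ) (u : ℕ → Fin p → ℝ) (w : ℕ → Ω → Fin n → ℝ) :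
    ℕ → Ω → Fin n → ℝ
  | 0 => fun _ => 0
  | t + 1 => fun ω => A *ᵥ state A B u w t ω + B *ᵥ u t + w t ω

/-- The output `y_t = u_tᵀ C x_t + z_t`. -/
def output {Ω : Type*} {n p : ℕ} (A : Matrix (Fin n) (Fin n) ℝ)
    (B : Matrix (Fin n) (Fin p) ℝ) (C : Matrix (Fin p) (Fin n) ℝ)
    (u : ℕ → Fin p → ℝ) (w : ℕ → Ω → Fin n → ℝ) (z : ℕ → Ω → ℝ) (t : ℕ) (ω : Ω) : ℝ :=
  u t ⬝ᵥ (C *ᵥ state A B u w t ω) + z t ω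

/-- Index type for the combined noise family `(w_t) ∪ (z_t)`. -/
abbrev NoiseType (n : ℕ) : ℕ ⊕ ℕ → Type
  | Sum.inl _ => Fin n → ℝ
  | Sum.inr _ => ℝ

instance (n : ℕ) : ∀ i, MeasurableSpace (NoiseType n i)
  | Sum.inl _ => inferInstanceAs (MeasurableSpace (Fin n → ℝ))
  | Sum.inr _ => inferInstanceAs (MeasurableSpace ℝ)

/-- The combined noise family. -/
def noiseFun {Ω : Type*} {n : ℕ} (w : ℕ → Ω → Fin n → ℝ) (z : ℕ → Ω → ℝ) :
    ∀ i : ℕ ⊕ ℕ, Ω → NoiseType n i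
  | Sum.inl t => w t
  | Sum.inr t => z t

/-- Noise assumption: the family `(w_t) ∪ (z_t)` is mutually independent, the `w_t`
are identically distributed, centered, with covariance `Sw`, and the `z_t` are
identically distributed, centered, with variance `σz²`. -/
structure NoiseAssumption {Ω : Type*} [MeasurableSpace Ω] {n : ℕ} (μ : Measure Ω)
    (w : ℕ → Ω → Fin n → ℝ) (z : ℕ → Ω → ℝ)
    (Sw : Matrix (Fin n) (Fin n) ℝ) (σz : ℝ) : Prop where
  meas_w : ∀ t, Measurable (w t)
  meas_z : ∀ t, Measurable (z t)
  indep : iIndepFun (noiseFun w z) μ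
  ident_w : ∀ s t, IdentDistrib (w s) (w t) μ μ
  ident_z : ∀ s t, IdentDistrib (z s) (z t) μ μ
  int_w : ∀ t i, Integrable (fun ω => w t ω i) μ
  mean_w : ∀ t i, ∫ ω, w t ω i ∂μ = 0
  int_ww : ∀ t i j, Integrable (fun ω => w t ω i * w t ω j) μ
  cov_w : ∀ t i j, ∫ ω, w t ω i * w t ω j ∂μ = Sw i j
  int_z : ∀ t, Integrable (z t) μ
  mean_z : ∀ t, ∫ ω, z t ω ∂μ = 0
  int_zz : ∀ t, Integrable (fun ω => z t ω ^ 2) μ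
  var_z : ∀ t, ∫ ω, z t ω ^ 2 ∂μ = σz ^ 2

/-- The infinite-horizon controllability Gramian `Γ_w^∞ = Σ_{i=0}^∞ Aⁱ Sw (Aⁱ)ᵀ`. -/
def gramInf {n : ℕ} (A Sw : Matrix (Fin n) (Fin n) ℝ) : Matrix (Fin n) (Fin n) ℝ :=
  ∑' i : ℕ, A ^ i * Sw * (A ^ i)ᵀ

/-- The Markov parameter matrix `G = [CB, CAB, …, CA^{L-1}B]`, block `k` being `C Aᵏ B`. -/
def markovG {n p : ℕ} (L : ℕ) (A : Matrix (Fin n) (Fin n) ℝ)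
    (B : Matrix (Fin n) (Fin p) ℝ) (C : Matrix (Fin p) (Fin n) ℝ) :
    Matrix (Fin p) (Fin L × Fin p) ℝ :=
  Matrix.of fun i k => (C * A ^ (k.1 : ℕ) * B) i k.2

/-- The matrix `F = [C, CA, …, CA^{L-1}]`, block `k` being `C Aᵏ`. -/
def markovF {n p : ℕ} (L : ℕ) (A : Matrix (Fin n) (Fin n) ℝ)
    (C : Matrix (Fin p) (Fin n) ℝ) : Matrix (Fin p) (Fin L × Fin n) ℝ :=
  Matrix.of fun i k => (C * A ^ (k.1 : ℕ)) i k.2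

/-- Column-major vectorization of a `p × κ` matrix: `vec(M)_(a,b) = M b a`,
so that `uᵀ M ū = (ū ⊗ u) ⬝ᵥ vec(M)`. -/
def vecOf {p : ℕ} {κ : Type*} (M : Matrix (Fin p) κ ℝ) : κ × Fin p → ℝ :=
  fun i => M i.2 i.1

/-- The design matrix `Ũ` whose row `s` (corresponding to `t = L+1+s`) is
`(ū_{t-1} ⊗ u_t)ᵀ`. -/
def designU {p : ℕ} (L T : ℕ) (u : ℕ → Fin p → ℝ) :
    Matrix (Fin (T - L)) ((Fin L × Fin p) × Fin p) ℝ :=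
  Matrix.of fun s => vkron (ubar L u (L + (s : ℕ))) (u (L + (s : ℕ) + 1))

/-!
Since the noise is centred, `E[y_t] = u_tᵀ C x̄_t` for the noise-free state `x̄_t`, and splitting
`C x̄_t = Σ_k C Aᵏ B u_{t-1-k}` at `k = L` gives `E[y] = Ũ vec(G) + r`, where `r` collects the inputs
older than the window. Least squares is unbiased on the first part, so `E[ΔG] = Ṽ⁻¹ Ũᵀ r`, and
`‖Ṽ⁻¹ Ũᵀ r‖_Ṽ ≤ ‖r‖₂` because `Ũ Ṽ⁻¹ Ũᵀ` is an orthogonal projection. Stability bounds each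
`|r_t|` by the geometric tail `β² ‖B‖ ‖C‖ Σ_{k ≥ L} φ ρᵏ`, and `λ_min(Ṽ) ‖v‖₂² ≤ ‖v‖_Ṽ²` converts
the first bound into the second.
-/

open scoped Matrix.Norms.L2Operator

section Norms

variable {ι κ ν : Type*} [Fintype ι] [Fintype κ] [Fintype ν]

lemma specNorm_eq_norm [DecidableEq κ] (M : Matrix ι κ ℝ) : specNorm M = ‖M‖ := rfl

lemma specNorm_nonneg [DecidableEq κ] (M : Matrix ι κ ℝ) : 0 ≤ specNorm M := norm_nonneg _

lemma specNorm_mul_le [DecidableEq κ] [DecidableEq ν] (M : Matrix ι κ ℝ) (N : Matrix κ ν ℝ) :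
    specNorm (M * N) ≤ specNorm M * specNorm N :=
  Matrix.l2_opNorm_mul M N

lemma vecNorm_nonneg (v : κ → ℝ) : 0 ≤ vecNorm v := Real.sqrt_nonneg _

lemma vecNorm_eq_norm (v : κ → ℝ) : vecNorm v = ‖(EuclideanSpace.equiv κ ℝ).symm v‖ := by
  simp [vecNorm, EuclideanSpace.norm_eq, sq_abs]

lemma vecNorm_eq_sqrt_dotProduct_self (v : κ → ℝ) : vecNorm v = √(v ⬝ᵥ v) := by
  simp only [vecNorm, dotProduct, sq]

lemma abs_dotProduct_mulVec_le [DecidableEq κ] (M : Matrix ι κ ℝ) (a : ι → ℝ) (v : κ → ℝ) :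
    |a ⬝ᵥ M *ᵥ v| ≤ specNorm M * vecNorm a * vecNorm v := by
  have hinner : a ⬝ᵥ M *ᵥ v =
      inner ℝ ((EuclideanSpace.equiv ι ℝ).symm a) ((EuclideanSpace.equiv ι ℝ).symm (M *ᵥ v)) := by
    simp [PiLp.inner_apply, dotProduct, mul_comm]
  rw [hinner, specNorm_eq_norm, vecNorm_eq_norm, vecNorm_eq_norm, mul_assoc, mul_left_comm]
  exact (abs_real_inner_le_norm _ _).trans
    (mul_le_mul_of_nonneg_left (M.l2_opNorm_mulVec _) (norm_nonneg _))

lemma vecNorm_le_mul_sqrt_card {v : κ → ℝ} {c : ℝ} (hc : 0 ≤ c) (hv : ∀ i, |v i| ≤ c) :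
    vecNorm v ≤ c * √(Fintype.card κ) := by
  calc vecNorm v ≤ √(∑ _i : κ, c ^ 2) :=
        Real.sqrt_le_sqrt <| sum_le_sum fun i _ => sq_le_sq' (abs_le.1 (hv i)).1 (abs_le.1 (hv i)).2
    _ = c * √(Fintype.card κ) := by
        rw [sum_const, card_univ, nsmul_eq_mul, Real.sqrt_mul' _ (sq_nonneg c), Real.sqrt_sq hc,
          mul_comm]

end Norms

section LambdaMin

variable {κ : Type*} [Fintype κ] {M : Matrix κ κ ℝ}

lemma zero_mem_lowerBounds_rayleigh (hM : M.PosSemidef) :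
    0 ∈ lowerBounds {r : ℝ | ∃ v : κ → ℝ, ∑ i, v i ^ 2 = 1 ∧ r = v ⬝ᵥ (M *ᵥ v)} := by
  rintro r ⟨v, -, rfl⟩
  simpa using hM.dotProduct_mulVec_nonneg v

lemma lambdaMin_nonneg (hM : M.PosSemidef) : 0 ≤ lambdaMin M :=
  Real.sInf_nonneg (zero_mem_lowerBounds_rayleigh hM)

lemma lambdaMin_mul_sum_sq_le (hM : M.PosSemidef) (v : κ → ℝ) :
    lambdaMin M * ∑ i, v i ^ 2 ≤ v ⬝ᵥ (M *ᵥ v) := by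
  rcases (sum_nonneg fun i _ => sq_nonneg (v i) : 0 ≤ ∑ i, v i ^ 2).eq_or_lt with hs | hs
  · rw [← hs, mul_zero]
    simpa using hM.dotProduct_mulVec_nonneg v
  set c := √(∑ i, v i ^ 2)
  have hc : c ^ 2 = ∑ i, v i ^ 2 := Real.sq_sqrt hs.le
  have hunit : ∑ i, (c⁻¹ • v) i ^ 2 = 1 := by
    simp only [Pi.smul_apply, smul_eq_mul, mul_pow, ← mul_sum, inv_pow, hc]
    exact inv_mul_cancel₀ hs.ne'
  have hle : lambdaMin M ≤ (c⁻¹ • v) ⬝ᵥ (M *ᵥ (c⁻¹ • v)) :=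
    csInf_le ⟨0, zero_mem_lowerBounds_rayleigh hM⟩ ⟨_, hunit, rfl⟩
  rw [mulVec_smul, dotProduct_smul, smul_dotProduct, smul_eq_mul, smul_eq_mul, ← mul_assoc,
    ← sq, inv_pow, hc, ← div_eq_inv_mul, le_div_iff₀ hs] at hle
  exact hle

lemma isCompact_setOf_sum_sq_eq_one : IsCompact {v : κ → ℝ | ∑ i, v i ^ 2 = 1} := by
  refine Metric.isCompact_of_isClosed_isBounded (isClosed_eq (by fun_prop) continuous_const)
    ((Metric.isBounded_closedBall (x := 0) (r := 1)).subset fun v hv => ?_)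
  rw [Metric.mem_closedBall, dist_zero_right, pi_norm_le_iff_of_nonneg zero_le_one]
  intro i
  rw [Real.norm_eq_abs, ← sq_le_one_iff_abs_le_one, ← hv.out]
  exact single_le_sum (fun j _ => sq_nonneg (v j)) (mem_univ i)

lemma lambdaMin_pos [Nonempty κ] (hM : M.PosDef) : 0 < lambdaMin M := by
  classical
  set S := {v : κ → ℝ | ∑ i, v i ^ 2 = 1}
  have hS : S.Nonempty := ⟨Pi.single (Classical.arbitrary κ) 1, by simp [S, Pi.single_apply]⟩
  have hcont : Continuous fun v : κ → ℝ => v ⬝ᵥ (M *ᵥ v) := by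
    simp only [dotProduct, mulVec]
    fun_prop
  have himage : {r : ℝ | ∃ v : κ → ℝ, ∑ i, v i ^ 2 = 1 ∧ r = v ⬝ᵥ (M *ᵥ v)} =
      (fun v => v ⬝ᵥ (M *ᵥ v)) '' S := by
    ext r
    simp [S, eq_comm]
  -- The infimum of the Rayleigh quotient is attained on the compact unit sphere.
  obtain ⟨v, hv, hmin⟩ : lambdaMin M ∈ (fun v => v ⬝ᵥ (M *ᵥ v)) '' S := by
    rw [lambdaMin, himage]
    exact (isCompact_setOf_sum_sq_eq_one.image hcont).sInf_mem (hS.image _)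
  have hv0 : v ≠ 0 := by
    rintro rfl
    simp [S] at hv
  rw [← hmin]
  simpa using hM.dotProduct_mulVec_pos hv0

lemma vecNorm_le_mnorm_div_sqrt_lambdaMin (hM : M.PosDef) (v : κ → ℝ) :
    vecNorm v ≤ mnorm M v / √(lambdaMin M) := by
  cases isEmpty_or_nonempty κ
  · rw [show vecNorm v = 0 by simp [vecNorm]]
    exact div_nonneg (Real.sqrt_nonneg _) (Real.sqrt_nonneg _)
  rw [le_div_iff₀ (Real.sqrt_pos.2 (lambdaMin_pos hM)), vecNorm, mnorm,
    ← Real.sqrt_mul (sum_nonneg fun i _ => sq_nonneg (v i)), mul_comm]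
  exact Real.sqrt_le_sqrt (lambdaMin_mul_sum_sq_le hM.posSemidef v)

end LambdaMin

section LeastSquares

variable {ν κ : Type*} [Fintype ν] [Fintype κ] [DecidableEq κ] {U : Matrix ν κ ℝ}

lemma leastSquares_mulVec_add_sub (hU : IsUnit (Uᵀ * U).det) (g : κ → ℝ) (r : ν → ℝ) :
    ((Uᵀ * U)⁻¹ * Uᵀ) *ᵥ (U *ᵥ g + r) - g = ((Uᵀ * U)⁻¹ * Uᵀ) *ᵥ r := by
  rw [mulVec_add, mulVec_mulVec, Matrix.mul_assoc, nonsing_inv_mul _ hU, one_mulVec,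
    add_sub_cancel_left]

lemma mnorm_leastSquares_le (hU : IsUnit (Uᵀ * U).det) (r : ν → ℝ) :
    mnorm (Uᵀ * U) (((Uᵀ * U)⁻¹ * Uᵀ) *ᵥ r) ≤ vecNorm r := by
  set q := ((Uᵀ * U)⁻¹ * Uᵀ) *ᵥ r
  set s := U *ᵥ q
  have hnormal : (Uᵀ * U) *ᵥ q = Uᵀ *ᵥ r := by
    rw [mulVec_mulVec, ← Matrix.mul_assoc, mul_nonsing_inv _ hU, Matrix.one_mul]
  have hss : q ⬝ᵥ ((Uᵀ * U) *ᵥ q) = s ⬝ᵥ s := by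
    rw [← mulVec_mulVec, dotProduct_mulVec, vecMul_transpose]
  have hsr : q ⬝ᵥ ((Uᵀ * U) *ᵥ q) = s ⬝ᵥ r := by
    rw [hnormal, dotProduct_mulVec, vecMul_transpose]
  -- `s = U q` is the orthogonal projection of `r`, so `‖s‖² = ⟨s, r⟩ ≤ ‖r‖²`.
  have hproj : 0 ≤ (r - s) ⬝ᵥ (r - s) := sum_nonneg fun i _ => mul_self_nonneg _
  rw [mnorm, vecNorm_eq_sqrt_dotProduct_self]
  apply Real.sqrt_le_sqrt
  rw [sub_dotProduct, dotProduct_sub, dotProduct_sub, dotProduct_comm r s] at hproj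
  linarith

end LeastSquares

section Expectation

variable {Ω ν κ : Type*} [MeasurableSpace Ω] {μ : Measure Ω} [Fintype ν] {f : Ω → ν → ℝ}

lemma integrable_dotProduct (hf : ∀ i, Integrable (fun ω => f ω i) μ) (v : ν → ℝ) :
    Integrable (fun ω => v ⬝ᵥ f ω) μ :=
  integrable_finsetSum _ fun i _ => (hf i).const_mul (v i)

lemma integral_dotProduct (hf : ∀ i, Integrable (fun ω => f ω i) μ) (v : ν → ℝ) :
    ∫ ω, v ⬝ᵥ f ω ∂μ = v ⬝ᵥ fun i => ∫ ω, f ω i ∂μ := by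
  simp only [dotProduct]
  rw [integral_finsetSum _ fun i _ => (hf i).const_mul (v i)]
  simp only [integral_const_mul]

lemma integrable_mulVec_apply (hf : ∀ i, Integrable (fun ω => f ω i) μ) (M : Matrix κ ν ℝ)
    (a : κ) : Integrable (fun ω => (M *ᵥ f ω) a) μ :=
  integrable_dotProduct hf (M a)

lemma integral_mulVec_apply (hf : ∀ i, Integrable (fun ω => f ω i) μ) (M : Matrix κ ν ℝ)
    (a : κ) : ∫ ω, (M *ᵥ f ω) a ∂μ = (M *ᵥ fun i => ∫ ω, f ω i ∂μ) a :=
  integral_dotProduct hf (M a)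

lemma integral_mulVec_sub_apply [IsProbabilityMeasure μ]
    (hf : ∀ i, Integrable (fun ω => f ω i) μ) (M : Matrix κ ν ℝ) (g : κ → ℝ) :
    (fun a => ∫ ω, (M *ᵥ f ω - g) a ∂μ) = M *ᵥ (fun i => ∫ ω, f ω i ∂μ) - g := by
  funext a
  rw [Pi.sub_apply, ← integral_mulVec_apply hf]
  exact (integral_sub (integrable_mulVec_apply hf M a) (integrable_const _)).trans
    (by rw [integral_const, probReal_univ, one_smul])

end Expectation

section NominalSystem

variable {n p : ℕ} (L : ℕ) (A : Matrix (Fin n) (Fin n) ℝ) (B : Matrix (Fin n) (Fin p) ℝ)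
  (C : Matrix (Fin p) (Fin n) ℝ) (u : ℕ → Fin p → ℝ)

def nominalState : ℕ → Fin n → ℝ
  | 0 => 0
  | t + 1 => A *ᵥ nominalState t + B *ᵥ u t

lemma nominalState_succ_eq_sum (t : ℕ) :
    nominalState A B u (t + 1) = ∑ k ∈ range (t + 1), (A ^ k * B) *ᵥ u (t - k) := by
  induction t with
  | zero => simp [nominalState]
  | succ t ih =>
    rw [nominalState, ih, sum_range_succ' _ (t + 1), mulVec_sum]
    simp only [mulVec_mulVec, ← Matrix.mul_assoc, ← pow_succ', pow_zero, Matrix.one_mul,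
      Nat.sub_zero, Nat.add_sub_add_right]

lemma markovG_mulVec_ubar (t : ℕ) :
    markovG L A B C *ᵥ ubar L u t = ∑ k ∈ range L, (C * A ^ k * B) *ᵥ u (t - k) := by
  ext i
  rw [Finset.sum_apply, ← Fin.sum_univ_eq_sum_range (fun k => ((C * A ^ k * B) *ᵥ u (t - k)) i)]
  simp only [mulVec, dotProduct, Fintype.sum_prod_type, markovG, ubar, of_apply]

def markovTail (t : ℕ) : Fin p → ℝ :=
  ∑ k ∈ Ico L (t + 1), (C * A ^ k * B) *ᵥ u (t - k)

lemma mulVec_nominalState_succ {t : ℕ} (ht : L ≤ t + 1) :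
    C *ᵥ nominalState A B u (t + 1) = markovG L A B C *ᵥ ubar L u t + markovTail L A B C u t := by
  rw [nominalState_succ_eq_sum, mulVec_sum, markovG_mulVec_ubar, markovTail,
    sum_range_add_sum_Ico _ ht]
  simp only [mulVec_mulVec, Matrix.mul_assoc]

lemma vkron_dotProduct_vecOf {κ : Type*} [Fintype κ] (M : Matrix (Fin p) κ ℝ) (x : κ → ℝ)
    (y : Fin p → ℝ) : vkron x y ⬝ᵥ vecOf M = y ⬝ᵥ (M *ᵥ x) := by
  simp only [dotProduct, mulVec, vkron, vecOf, Fintype.sum_prod_type, mul_sum]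
  rw [sum_comm]
  exact sum_congr rfl fun i _ => sum_congr rfl fun j _ => by ring

lemma designU_mulVec_vecOf_apply {T : ℕ} (M : Matrix (Fin p) (Fin L × Fin p) ℝ)
    (s : Fin (T - L)) :
    (designU L T u *ᵥ vecOf M) s = u (L + s + 1) ⬝ᵥ (M *ᵥ ubar L u (L + s)) :=
  vkron_dotProduct_vecOf M _ _

lemma nonneg_of_specNorm_pow_le {ρ φ : ℝ} (hstab : ∀ k : ℕ, specNorm (A ^ k) ≤ φ * ρ ^ k) :
    0 ≤ φ :=
  (specNorm_nonneg (1 : Matrix (Fin n) (Fin n) ℝ)).trans (by simpa using hstab 0)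

lemma abs_dotProduct_markovTail_le {ρ φ β : ℝ} (hρ0 : 0 ≤ ρ) (hρ1 : ρ < 1)
    (hstab : ∀ k : ℕ, specNorm (A ^ k) ≤ φ * ρ ^ k) (hu : ∀ t, vecNorm (u t) ≤ β) (t : ℕ) :
    |u (t + 1) ⬝ᵥ markovTail L A B C u t| ≤
      β ^ 2 * specNorm B * specNorm C * (φ * ρ ^ L / (1 - ρ)) := by
  have hβ : 0 ≤ β := (vecNorm_nonneg _).trans (hu 0)
  have hK : 0 ≤ β ^ 2 * specNorm B * specNorm C * φ := by
    have := nonneg_of_specNorm_pow_le A hstab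
    have := specNorm_nonneg B
    have := specNorm_nonneg C
    positivity
  have hterm (k : ℕ) : |u (t + 1) ⬝ᵥ (C * A ^ k * B) *ᵥ u (t - k)| ≤
      β ^ 2 * specNorm B * specNorm C * φ * ρ ^ k := by
    have hCAB : specNorm (C * A ^ k * B) ≤ specNorm C * (φ * ρ ^ k) * specNorm B :=
      (specNorm_mul_le _ _).trans <| mul_le_mul_of_nonneg_right
        ((specNorm_mul_le _ _).trans (mul_le_mul_of_nonneg_left (hstab k) (specNorm_nonneg C)))
        (specNorm_nonneg B)
    calc |u (t + 1) ⬝ᵥ (C * A ^ k * B) *ᵥ u (t - k)|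
        ≤ specNorm (C * A ^ k * B) * vecNorm (u (t + 1)) * vecNorm (u (t - k)) :=
          abs_dotProduct_mulVec_le _ _ _
      _ ≤ specNorm C * (φ * ρ ^ k) * specNorm B * β * β :=
          mul_le_mul (mul_le_mul hCAB (hu _) (vecNorm_nonneg _) ((specNorm_nonneg _).trans hCAB))
            (hu _) (vecNorm_nonneg _) (mul_nonneg ((specNorm_nonneg _).trans hCAB) hβ)
      _ = β ^ 2 * specNorm B * specNorm C * φ * ρ ^ k := by ring
  calc |u (t + 1) ⬝ᵥ markovTail L A B C u t|
      ≤ ∑ k ∈ Ico L (t + 1), |u (t + 1) ⬝ᵥ (C * A ^ k * B) *ᵥ u (t - k)| := by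
        rw [markovTail, dotProduct_sum]
        exact abs_sum_le_sum_abs _ _
    _ ≤ ∑ k ∈ Ico L (t + 1), β ^ 2 * specNorm B * specNorm C * φ * ρ ^ k :=
        sum_le_sum fun k _ => hterm k
    _ ≤ β ^ 2 * specNorm B * specNorm C * φ * (ρ ^ L / (1 - ρ)) := by
        rw [← mul_sum]
        exact mul_le_mul_of_nonneg_left (geom_sum_Ico_le_of_lt_one hρ0 hρ1) hK
    _ = β ^ 2 * specNorm B * specNorm C * (φ * ρ ^ L / (1 - ρ)) := by ring

end NominalSystem

section NoisySystem

variable {Ω : Type*} [MeasurableSpace Ω] {μ : Measure Ω} [IsProbabilityMeasure μ] {n p : ℕ}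
  {A : Matrix (Fin n) (Fin n) ℝ} {B : Matrix (Fin n) (Fin p) ℝ} {C : Matrix (Fin p) (Fin n) ℝ}
  {u : ℕ → Fin p → ℝ} {w : ℕ → Ω → Fin n → ℝ} {z : ℕ → Ω → ℝ}

lemma integrable_state (hw : ∀ t i, Integrable (fun ω => w t ω i) μ) (t : ℕ) (i : Fin n) :
    Integrable (fun ω => state A B u w t ω i) μ := by
  induction t generalizing i with
  | zero => exact integrable_const (0 : ℝ)
  | succ t ih => exact ((integrable_mulVec_apply ih A i).add (integrable_const _)).add (hw t i)

lemma integral_state (hw : ∀ t i, Integrable (fun ω => w t ω i) μ)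
    (hw0 : ∀ t i, ∫ ω, w t ω i ∂μ = 0) (t : ℕ) :
    (fun i => ∫ ω, state A B u w t ω i ∂μ) = nominalState A B u t := by
  induction t with
  | zero => funext i; simp [state, nominalState]
  | succ t ih =>
    funext i
    change ∫ ω, (A *ᵥ state A B u w t ω) i + (B *ᵥ u t) i + w t ω i ∂μ =
      (A *ᵥ nominalState A B u t + B *ᵥ u t) i
    rw [integral_add (f := fun ω => (A *ᵥ state A B u w t ω) i + (B *ᵥ u t) i)
        ((integrable_mulVec_apply (integrable_state hw t) A i).add
        (integrable_const _)) (hw t i), integral_add (integrable_mulVec_apply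
        (integrable_state hw t) A i) (integrable_const _), integral_mulVec_apply
        (integrable_state hw t), ih, hw0, integral_const, probReal_univ, one_smul, add_zero,
      Pi.add_apply]

lemma integrable_output (hw : ∀ t i, Integrable (fun ω => w t ω i) μ)
    (hz : ∀ t, Integrable (z t) μ) (t : ℕ) : Integrable (output A B C u w z t) μ := by
  exact (integrable_dotProduct (integrable_mulVec_apply (integrable_state hw t) C) (u t)).add (hz t)

lemma integral_output (hw : ∀ t i, Integrable (fun ω => w t ω i) μ)
    (hw0 : ∀ t i, ∫ ω, w t ω i ∂μ = 0) (hz : ∀ t, Integrable (z t) μ)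
    (hz0 : ∀ t, ∫ ω, z t ω ∂μ = 0) (t : ℕ) :
    ∫ ω, output A B C u w z t ω ∂μ = u t ⬝ᵥ (C *ᵥ nominalState A B u t) := by
  simp only [output, dotProduct_mulVec]
  rw [integral_add (integrable_dotProduct (integrable_state hw t) _) (hz t),
    integral_dotProduct (integrable_state hw t), integral_state hw hw0, hz0, add_zero]

lemma integral_output_eq_designU_add (hw : ∀ t i, Integrable (fun ω => w t ω i) μ)
    (hw0 : ∀ t i, ∫ ω, w t ω i ∂μ = 0) (hz : ∀ t, Integrable (z t) μ)
    (hz0 : ∀ t, ∫ ω, z t ω ∂μ = 0) {L T : ℕ} (s : Fin (T - L)) :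
    ∫ ω, output A B C u w z (L + s + 1) ω ∂μ =
      (designU L T u *ᵥ vecOf (markovG L A B C)) s +
        u (L + s + 1) ⬝ᵥ markovTail L A B C u (L + s) := by
  rw [integral_output hw hw0 hz hz0, mulVec_nominalState_succ L A B C u (by omega),
    dotProduct_add, designU_mulVec_vecOf_apply]

end NoisySystem

theorem mean_estimation_error_bounds_general
    {Ω : Type*} [MeasurableSpace Ω] (μ : Measure Ω) [IsProbabilityMeasure μ]
    {n p L T : ℕ}
    (A : Matrix (Fin n) (Fin n) ℝ) (B : Matrix (Fin n) (Fin p) ℝ)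
    (C : Matrix (Fin p) (Fin n) ℝ)
    (u : ℕ → Fin p → ℝ) (w : ℕ → Ω → Fin n → ℝ) (z : ℕ → Ω → ℝ)
    (Sw : Matrix (Fin n) (Fin n) ℝ) (σz : ℝ)
    (hnoise : NoiseAssumption μ w z Sw σz)
    (ρ φ : ℝ) (hρ : ρ ∈ Set.Ioo (0 : ℝ) 1)
    (hstab : ∀ k : ℕ, specNorm (A ^ k) ≤ φ * ρ ^ k)
    (β : ℝ) (hu : ∀ t, vecNorm (u t) ≤ β)
    (Util : Matrix (Fin (T - L)) ((Fin L × Fin p) × Fin p) ℝ)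
    (hUtil : Util = designU L T u)
    (Vtil : Matrix ((Fin L × Fin p) × Fin p) ((Fin L × Fin p) × Fin p) ℝ)
    (hVtil : Vtil = Utilᵀ * Util) (hpos : Vtil.PosDef)
    (y : Ω → Fin (T - L) → ℝ)
    (hy : ∀ ω s, y ω s = output A B C u w z (L + 1 + (s : ℕ)) ω)
    (ΔG : Ω → ((Fin L × Fin p) × Fin p → ℝ))
    (hΔG : ∀ ω, ΔG ω = Vtil⁻¹ *ᵥ (Utilᵀ *ᵥ y ω) - vecOf (markovG L A B C))
    (meanΔG : (Fin L × Fin p) × Fin p → ℝ)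
    (hmean : meanΔG = fun a => ∫ ω, ΔG ω a ∂μ) :
    mnorm Vtil meanΔG ≤
        β ^ 2 * specNorm B * specNorm C * (φ * ρ ^ L / (1 - ρ))
          * Real.sqrt ((T - L : ℕ) : ℝ) ∧
      vecNorm meanΔG ≤
        β ^ 2 * specNorm B * specNorm C * (φ * ρ ^ L / (1 - ρ))
          * Real.sqrt (((T - L : ℕ) : ℝ) / lambdaMin Vtil) := by
  subst hUtil hVtil hmean
  obtain ⟨hρ0, hρ1⟩ := hρ
  set U := designU L T u
  set c := β ^ 2 * specNorm B * specNorm C * (φ * ρ ^ L / (1 - ρ))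
  set r : Fin (T - L) → ℝ := fun s => u (L + s + 1) ⬝ᵥ markovTail L A B C u (L + s)
  have hy' (s : Fin (T - L)) : (fun ω => y ω s) = output A B C u w z (L + s + 1) :=
    funext fun ω => (hy ω s).trans (by rw [Nat.add_right_comm])
  have hyint (s : Fin (T - L)) : Integrable (fun ω => y ω s) μ :=
    hy' s ▸ integrable_output hnoise.int_w hnoise.int_z _
  have hEy : (fun s => ∫ ω, y ω s ∂μ) = U *ᵥ vecOf (markovG L A B C) + r := by
    funext s
    rw [hy' s, integral_output_eq_designU_add hnoise.int_w hnoise.mean_w hnoise.int_z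
      hnoise.mean_z]
    rfl
  have hU : IsUnit (Uᵀ * U).det := (isUnit_iff_isUnit_det _).1 hpos.isUnit
  have hEΔG : (fun a => ∫ ω, ΔG ω a ∂μ) = ((Uᵀ * U)⁻¹ * Uᵀ) *ᵥ r := by
    simp only [hΔG, mulVec_mulVec]
    rw [integral_mulVec_sub_apply hyint, hEy, leastSquares_mulVec_add_sub hU]
  have hc : 0 ≤ c := by
    have := nonneg_of_specNorm_pow_le A hstab
    have := specNorm_nonneg B
    have := specNorm_nonneg C
    have : 0 < 1 - ρ := sub_pos.2 hρ1
    positivity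
  have hVnorm : mnorm (Uᵀ * U) (((Uᵀ * U)⁻¹ * Uᵀ) *ᵥ r) ≤ c * √((T - L : ℕ) : ℝ) := by
    refine (mnorm_leastSquares_le hU r).trans ?_
    simpa using vecNorm_le_mul_sqrt_card hc fun s : Fin (T - L) =>
      abs_dotProduct_markovTail_le L A B C u hρ0.le hρ1 hstab hu (L + s)
  rw [hEΔG]
  refine ⟨hVnorm, ?_⟩
  calc vecNorm (((Uᵀ * U)⁻¹ * Uᵀ) *ᵥ r)
      ≤ mnorm (Uᵀ * U) (((Uᵀ * U)⁻¹ * Uᵀ) *ᵥ r) / √(lambdaMin (Uᵀ * U)) :=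
        vecNorm_le_mnorm_div_sqrt_lambdaMin hpos _
    _ ≤ c * √((T - L : ℕ) : ℝ) / √(lambdaMin (Uᵀ * U)) := by gcongr
    _ = c * √(((T - L : ℕ) : ℝ) / lambdaMin (Uᵀ * U)) := by
        rw [Real.sqrt_div' _ (lambdaMin_nonneg hpos.posSemidef), mul_div_assoc]

/-- **Mean estimation error bounds.**
`‖E[ΔG]‖_Ṽ ≤ β²‖B‖‖C‖ (φρᴸ/(1-ρ)) √(T-L)` and
`‖E[ΔG]‖₂ ≤ β²‖B‖‖C‖ (φρᴸ/(1-ρ)) √((T-L)/λ_min(Ṽ))`. -/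
theorem mean_estimation_error_bounds
    {Ω : Type*} [MeasurableSpace Ω] (μ : Measure Ω) [IsProbabilityMeasure μ]
    {n p L T : ℕ} (hL : 1 ≤ L) (hT : L < T)
    (A : Matrix (Fin n) (Fin n) ℝ) (B : Matrix (Fin n) (Fin p) ℝ)
    (C : Matrix (Fin p) (Fin n) ℝ)
    (u : ℕ → Fin p → ℝ) (w : ℕ → Ω → Fin n → ℝ) (z : ℕ → Ω → ℝ)
    (Sw : Matrix (Fin n) (Fin n) ℝ) (σz : ℝ)
    (hnoise : NoiseAssumption μ w z Sw σz)
    (ρ φ : ℝ) (hρ : ρ ∈ Set.Ioo (0 : ℝ) 1) (hφ : 1 ≤ φ)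
    (hstab : ∀ k : ℕ, specNorm (A ^ k) ≤ φ * ρ ^ k)
    (β : ℝ) (hu : ∀ t, vecNorm (u t) ≤ β)
    (Util : Matrix (Fin (T - L)) ((Fin L × Fin p) × Fin p) ℝ)
    (hUtil : Util = designU L T u)
    (Vtil : Matrix ((Fin L × Fin p) × Fin p) ((Fin L × Fin p) × Fin p) ℝ)
    (hVtil : Vtil = Utilᵀ * Util) (hpos : Vtil.PosDef)
    (y : Ω → Fin (T - L) → ℝ)
    (hy : ∀ ω s, y ω s = output A B C u w z (L + 1 + (s : ℕ)) ω)
    (ΔG : Ω → ((Fin L × Fin p) × Fin p → ℝ))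
    (hΔG : ∀ ω, ΔG ω = Vtil⁻¹ *ᵥ (Utilᵀ *ᵥ y ω) - vecOf (markovG L A B C))
    (meanΔG : (Fin L × Fin p) × Fin p → ℝ)
    (hmean : meanΔG = fun a => ∫ ω, ΔG ω a ∂μ) :
    mnorm Vtil meanΔG ≤
        β ^ 2 * specNorm B * specNorm C * (φ * ρ ^ L / (1 - ρ))
          * Real.sqrt ((T - L : ℕ) : ℝ) ∧
      vecNorm meanΔG ≤
        β ^ 2 * specNorm B * specNorm C * (φ * ρ ^ L / (1 - ρ))
          * Real.sqrt (((T - L : ℕ) : ℝ) / lambdaMin Vtil) :=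
  mean_estimation_error_bounds_general μ A B C u w z Sw σz hnoise ρ φ hρ hstab β hu Util hUtil Vtil
    hVtil hpos y hy ΔG hΔG meanΔG hmean
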